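/- The grammic and plactic congruences differ on three letters: there exist words u, v over {1,2,3} (e.g., u = 3212, v = 2132) with u ≡_gram v but u ≢ v in the plactic monoid; hence the plactic congruence is strictly finer than the grammic congruence on a three-letter alphabet. -/
import Mathlib


/-- Action of a letter of `{1,2,3}` (encoded as `Fin 3`) on a row identified
with its multiplicity vector `(x₁,x₂,x₃) ∈ ℕ³`. -/
def act3 (x : ℕ × ℕ × ℕ) (j : Fin 3) : ℕ × ℕ × ℕ :=
  if j = 0 then
    if 0 < x.2.1 then (x.1 + 1, x.2.1 - 1, x.2.2)
    else if 0 < x.2.2 then (x.1 + 1, x.2.1, x.2.2 - 1)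
    else (x.1 + 1, x.2.1, x.2.2)
  else if j = 1 then (x.1, x.2.1 + 1, x.2.2 - 1)
  else (x.1, x.2.1, x.2.2 + 1)

/-- Action of a word, composing letter actions from left to right. -/
def actW3 (x : ℕ × ℕ × ℕ) (w : List (Fin 3)) : ℕ × ℕ × ℕ :=
  w.foldl act3 x

/-- One-step Knuth (plactic) relation with contexts:
`bac ∼ bca` for `a < b ≤ c` and `acb ∼ cab` for `a ≤ b < c`. -/
inductive KnuthStep {A : Type*} [LinearOrder A] : List A → List A → Prop
  | k1 (u v : List A) (a b c : A) (h1 : a < b) (h2 : b ≤ c) :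
      KnuthStep (u ++ [b, a, c] ++ v) (u ++ [b, c, a] ++ v)
  | k2 (u v : List A) (a b c : A) (h1 : a ≤ b) (h2 : b < c) :
      KnuthStep (u ++ [a, c, b] ++ v) (u ++ [c, a, b] ++ v)

/-- The plactic congruence: equivalence closure of the Knuth steps
(which are already closed under contexts). -/
def Plactic {A : Type*} [LinearOrder A] : List A → List A → Prop :=
  Relation.EqvGen KnuthStep

lemma mid1 (a b c : Fin 3) (h1 : a < b) (h2 : b ≤ c) (x : ℕ × ℕ × ℕ) :
    actW3 x [b, a, c] = actW3 x [b, c, a] := by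
  obtain ⟨x1, x2, x3⟩ := x
  fin_cases a <;> fin_cases b <;> fin_cases c <;>
    simp_all [actW3, act3, Prod.ext_iff] <;> split_ifs <;> simp_all <;> omega

lemma mid2 (a b c : Fin 3) (h1 : a ≤ b) (h2 : b < c) (x : ℕ × ℕ × ℕ) :
    actW3 x [a, c, b] = actW3 x [c, a, b] := by
  obtain ⟨x1, x2, x3⟩ := x
  fin_cases a <;> fin_cases b <;> fin_cases c <;>
    simp_all [actW3, act3, Prod.ext_iff] <;> split_ifs <;> simp_all <;> omega

lemma actW3_append (x : ℕ × ℕ × ℕ) (u v : List (Fin 3)) :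
    actW3 x (u ++ v) = actW3 (actW3 x u) v := List.foldl_append ..

lemma step_act {u v : List (Fin 3)} (h : KnuthStep u v) (x : ℕ × ℕ × ℕ) :
    actW3 x u = actW3 x v := by
  cases h with
  | k1 u v a b c h1 h2 => rw [actW3_append, actW3_append, mid1 a b c h1 h2, ← actW3_append, ← actW3_append, List.append_assoc]
  | k2 u v a b c h1 h2 => rw [actW3_append, actW3_append, mid2 a b c h1 h2, ← actW3_append, ← actW3_append, List.append_assoc]

/-- The plactic class of `[2,1,0,1]` within words of its content. -/
def C3 : List (List (Fin 3)) := [[1, 2, 1, 0], [2, 1, 0, 1], [2, 1, 1, 0]]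

def inC (w : List (Fin 3)) : Bool := decide (w ∈ C3)

lemma inC_len {w : List (Fin 3)} (h : w.length ≠ 4) : inC w = false := by
  simp only [inC, decide_eq_false_iff_not]
  intro hw
  have : w = [1, 2, 1, 0] ∨ w = [2, 1, 0, 1] ∨ w = [2, 1, 1, 0] := by
    simpa [C3] using hw
  rcases this with h' | h' | h' <;> subst h' <;> simp at h

lemma step_inC {u v : List (Fin 3)} (h : KnuthStep u v) : inC u = inC v := by
  cases h with
  | k1 u v a b c h1 h2 =>
    match u, v with
    | [], [d] =>
      revert h1 h2; revert a b c d; decide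
    | [d], [] =>
      revert h1 h2; revert a b c d; decide
    | [], [] =>
      rw [inC_len (by simp), inC_len (by simp)]
    | [], _ :: _ :: _ =>
      rw [inC_len (by simp only [List.length_append, List.length_cons, List.length_nil]; omega), inC_len (by simp only [List.length_append, List.length_cons, List.length_nil]; omega)]
    | _ :: _, _ :: _ =>
      rw [inC_len (by simp only [List.length_append, List.length_cons, List.length_nil]; omega), inC_len (by simp only [List.length_append, List.length_cons, List.length_nil]; omega)]
    | _ :: _ :: _, [] =>
      rw [inC_len (by simp only [List.length_append, List.length_cons, List.length_nil]; omega), inC_len (by simp only [List.length_append, List.length_cons, List.length_nil]; omega)]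
  | k2 u v a b c h1 h2 =>
    match u, v with
    | [], [d] =>
      revert h1 h2; revert a b c d; decide
    | [d], [] =>
      revert h1 h2; revert a b c d; decide
    | [], [] =>
      rw [inC_len (by simp), inC_len (by simp)]
    | [], _ :: _ :: _ =>
      rw [inC_len (by simp only [List.length_append, List.length_cons, List.length_nil]; omega), inC_len (by simp only [List.length_append, List.length_cons, List.length_nil]; omega)]
    | _ :: _, _ :: _ =>
      rw [inC_len (by simp only [List.length_append, List.length_cons, List.length_nil]; omega), inC_len (by simp only [List.length_append, List.length_cons, List.length_nil]; omega)]
    | _ :: _ :: _, [] =>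
      rw [inC_len (by simp only [List.length_append, List.length_cons, List.length_nil]; omega), inC_len (by simp only [List.length_append, List.length_cons, List.length_nil]; omega)]

lemma plactic_inC {u v : List (Fin 3)} (h : Plactic u v) : inC u = inC v := by
  induction h with
  | rel _ _ h => exact step_inC h
  | refl => rfl
  | symm _ _ _ ih => exact ih.symm
  | trans _ _ _ _ _ ih1 ih2 => exact ih1.trans ih2

/-- the plactic congruence is strictly finer than the grammic
congruence on three letters, witnessed by `3212` and `2132`. -/
theorem plactic_strictly_finer_than_gram :
    (∀ u v : List (Fin 3), Plactic u v →
      ∀ x : ℕ × ℕ × ℕ, actW3 x u = actW3 x v) ∧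
    (∀ x : ℕ × ℕ × ℕ,
      actW3 x [2, 1, 0, 1] = actW3 x ([1, 0, 2, 1] : List (Fin 3))) ∧
    ¬ Plactic ([2, 1, 0, 1] : List (Fin 3)) [1, 0, 2, 1] := by
  refine ⟨fun u v h x => ?_, fun x => ?_, fun h => ?_⟩
  · induction h with
    | rel _ _ h => exact step_act h x
    | refl => rfl
    | symm _ _ _ ih => exact ih.symm
    | trans _ _ _ _ _ ih1 ih2 => exact ih1.trans ih2
  · obtain ⟨x1, x2, x3⟩ := x
    simp [actW3, act3, Prod.ext_iff] <;> split_ifs <;> simp_all <;> omega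
  · have := plactic_inC h
    simp [inC, C3] at this
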